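/- Let N ≥ 1, let ψ : ℂ → ℝ, and let Q = {Q₁,…,Q_N} be a complete set of monic polynomials that is orthogonal with respect to ⟨·|·⟩, i.e. ⟨Q_j | Q_k⟩ = 0 whenever j ≠ k. Then, assuming absolute integrability, ∫_{ℂ^N} |Δ(γ)|² · ∏_{n=1}^N ψ(γ_n) e^{−|γ_n|²/2} dλ_{2N}(γ) = N! · ∏_{n=1}^N ⟨Q_n | Q_n⟩. -/

import Mathlib

open MeasureTheory Finset

noncomputable section

/-- The Vandermonde product `Δ(γ) = ∏_{m<n} (γ_n - γ_m)`. -/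
def vand {K : ℕ} (γ : Fin K → ℂ) : ℂ := ∏ m : Fin K, ∏ n ∈ Finset.Ioi m, (γ n - γ m)

/-- The inner product `⟨P|Q⟩ = ∫_ℂ e^{−|γ|²/2} ψ(γ) conj(P(γ)) Q(γ) dλ₂(γ)`. -/
def innerGin (ψ : ℂ → ℝ) (P Q : Polynomial ℂ) : ℂ :=
  ∫ γ : ℂ, ((Real.exp (-(‖γ‖)^2/2) : ℝ) : ℂ) * ((ψ γ : ℝ) : ℂ) *
    (starRingEnd ℂ) (P.eval γ) * Q.eval γ

/-- The GinUE eigenvalue integrand `|Δ(γ)|² ∏_n ψ(γ_n) e^{−|γ_n|²/2}` on `ℂ^N`. -/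
def ginueIntegrand (ψ : ℂ → ℝ) {N : ℕ} (γ : Fin N → ℂ) : ℂ :=
  ((‖vand γ‖ : ℝ) : ℂ)^2 *
    ∏ n : Fin N, ((ψ (γ n) : ℝ) : ℂ) * ((Real.exp (-(‖γ n‖)^2/2) : ℝ) : ℂ)

end

/-!
Write `M(γ)` for the matrix `(Q_j(γ_i))`. Since the `Q_j` are monic of degree `j`, column
operations turn the Vandermonde matrix into `M(γ)`, so `|Δ(γ)|² = det (conj M(γ)) · det M(γ)`.
Andréief's identity turns the integral of such a product of determinants against a product
weight into `N!` times the determinant of the Gram matrix `(⟨Q_j | Q_k⟩)`, which is diagonal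
by orthogonality.
-/

namespace Matrix

variable {ι R : Type*} [Fintype ι] [DecidableEq ι] [CommRing R]

theorem det_eq_sum_sign_mul_prod_apply_perm (M : Matrix ι ι R) :
    M.det = ∑ σ : Equiv.Perm ι, (Equiv.Perm.sign σ : R) * ∏ i, M i (σ i) := by
  rw [← det_transpose, det_apply']
  rfl

theorem sum_sign_mul_sign_mul_prod_eq_factorial_mul_det (G : Matrix ι ι R) :
    ∑ σ : Equiv.Perm ι, ∑ τ : Equiv.Perm ι,
        (Equiv.Perm.sign σ : R) * Equiv.Perm.sign τ * ∏ i, G (σ i) (τ i)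
      = (Fintype.card ι).factorial * G.det := by
  have hrow : ∀ σ : Equiv.Perm ι,
      ∑ τ : Equiv.Perm ι, (Equiv.Perm.sign τ : R) * ∏ i, G (σ i) (τ i)
        = Equiv.Perm.sign σ * G.det := fun σ => by
    rw [← det_permute, det_eq_sum_sign_mul_prod_apply_perm]
    rfl
  calc _ = ∑ σ : Equiv.Perm ι, (Equiv.Perm.sign σ : R) * (Equiv.Perm.sign σ * G.det) := by
        simp_rw [← hrow, Finset.mul_sum, mul_assoc]
    _ = _ := by
        simp_rw [← mul_assoc, ← Int.cast_mul, ← Units.val_mul, Int.units_mul_self,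
          Units.val_one, Int.cast_one, one_mul, Finset.sum_const, card_univ, Fintype.card_perm,
          nsmul_eq_mul]

theorem IsDiag.det_eq_prod_diag {A : Matrix ι ι R} (h : A.IsDiag) : A.det = ∏ i, A i i := by
  conv_lhs => rw [← h.diagonal_diag]
  exact det_diagonal

end Matrix

open Matrix Finset in
/-- Andréief's identity. -/
theorem integral_det_mul_det_mul_prod {𝕜 ι α : Type*} [RCLike 𝕜] [Fintype ι] [DecidableEq ι]
    [MeasurableSpace α] (μ : Measure α) [SigmaFinite μ] (f g : ι → α → 𝕜) (w : α → 𝕜)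
    (hfg : ∀ j k, Integrable (fun y => w y * f j y * g k y) μ) :
    ∫ x, (of fun i j => f j (x i)).det * (of fun i j => g j (x i)).det * ∏ i, w (x i)
        ∂(Measure.pi fun _ => μ)
      = ((Fintype.card ι).factorial : 𝕜) * (of fun j k => ∫ y, w y * f j y * g k y ∂μ).det := by
  have hexpand : ∀ x : ι → α,
      (of fun i j => f j (x i)).det * (of fun i j => g j (x i)).det * ∏ i, w (x i)
        = ∑ σ : Equiv.Perm ι, ∑ τ : Equiv.Perm ι, (Equiv.Perm.sign σ : 𝕜) * Equiv.Perm.sign τ *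
            ∏ i, w (x i) * f (σ i) (x i) * g (τ i) (x i) := fun x => by
    simp_rw [det_eq_sum_sign_mul_prod_apply_perm, sum_mul_sum, sum_mul, prod_mul_distrib,
      of_apply]
    refine sum_congr rfl fun σ _ => sum_congr rfl fun τ _ => ?_
    ring
  have hterm : ∀ σ τ : Equiv.Perm ι, Integrable (fun x : ι → α =>
      ∏ i, w (x i) * f (σ i) (x i) * g (τ i) (x i)) (Measure.pi fun _ => μ) := fun σ τ =>
    Integrable.fintype_prod (f := fun i y => w y * f (σ i) y * g (τ i) y) fun i => hfg _ _
  calc _ = ∑ σ : Equiv.Perm ι, ∑ τ : Equiv.Perm ι, (Equiv.Perm.sign σ : 𝕜) * Equiv.Perm.sign τ *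
          ∏ i, ∫ y, w y * f (σ i) y * g (τ i) y ∂μ := by
        simp_rw [hexpand]
        rw [integral_finsetSum _ fun σ _ =>
          integrable_finsetSum _ fun τ _ => (hterm σ τ).const_mul _]
        refine sum_congr rfl fun σ _ => ?_
        rw [integral_finsetSum _ fun τ _ => (hterm σ τ).const_mul _]
        refine sum_congr rfl fun τ _ => ?_
        rw [integral_const_mul,
          integral_fintype_prod_eq_prod (f := fun i y => w y * f (σ i) y * g (τ i) y)]
    _ = _ := sum_sign_mul_sign_mul_prod_eq_factorial_mul_det
          (of fun j k => ∫ y, w y * f j y * g k y ∂μ)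

theorem vand_eq_det_eval {K : ℕ} (γ : Fin K → ℂ) (p : Fin K → Polynomial ℂ)
    (hdeg : ∀ j, (p j).natDegree = j) (hmonic : ∀ j, (p j).Monic) :
    vand γ = (Matrix.of fun i j => (p j).eval (γ i)).det := by
  rw [← Matrix.det_eval_matrixOfPolynomials_eq_det_vandermonde γ p hdeg hmonic,
    Matrix.det_vandermonde]
  rfl

open ComplexConjugate in
theorem ginueIntegrand_eq_det_mul_det {N : ℕ} (ψ : ℂ → ℝ) (p : Fin N → Polynomial ℂ)
    (hdeg : ∀ j, (p j).natDegree = j) (hmonic : ∀ j, (p j).Monic) (γ : Fin N → ℂ) :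
    ginueIntegrand ψ γ
      = (Matrix.of fun i j => conj ((p j).eval (γ i))).det
          * (Matrix.of fun i j => (p j).eval (γ i)).det
          * ∏ i, ((Real.exp (-(‖γ i‖)^2/2) : ℝ) : ℂ) * ((ψ (γ i) : ℝ) : ℂ) := by
  have hconj : (Matrix.of fun i j => conj ((p j).eval (γ i))).det = conj (vand γ) := by
    rw [vand_eq_det_eval γ p hdeg hmonic, RingHom.map_det]
    rfl
  rw [ginueIntegrand, hconj, ← vand_eq_det_eval γ p hdeg hmonic, ← Complex.ofReal_pow,
    Complex.sq_norm, Complex.normSq_eq_conj_mul_self]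
  simp_rw [mul_comm ((ψ _ : ℝ) : ℂ)]

theorem ginue_average_eq_prod_general (N : ℕ) (ψ : ℂ → ℝ)
    (Q : ℕ → Polynomial ℂ)
    (hQ : ∀ n < N, (Q n).Monic ∧ (Q n).natDegree = n)
    (horth : ∀ j < N, ∀ k < N, j ≠ k → innerGin ψ (Q j) (Q k) = 0)
    (hIntW : ∀ p < N, ∀ q < N, Integrable (fun γ : ℂ =>
      ((Real.exp (-(‖γ‖)^2/2) : ℝ) : ℂ) * ((ψ γ : ℝ) : ℂ) *
        (starRingEnd ℂ) ((Q p).eval γ) * (Q q).eval γ)) :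
    (∫ γ : Fin N → ℂ, ginueIntegrand ψ γ)
      = (Nat.factorial N : ℂ) * ∏ n ∈ Finset.range N, innerGin ψ (Q n) (Q n) := by
  have hGram : (Matrix.of fun j k : Fin N => innerGin ψ (Q j) (Q k)).IsDiag :=
    fun j k hjk => horth j j.isLt k k.isLt (Fin.val_injective.ne hjk)
  simp_rw [ginueIntegrand_eq_det_mul_det ψ (fun j : Fin N => Q j) (fun j => (hQ j j.isLt).2)
    (fun j => (hQ j j.isLt).1)]
  rw [volume_pi, integral_det_mul_det_mul_prod (ι := Fin N) volume _ _ _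
    fun j k => hIntW j j.isLt k k.isLt, Fintype.card_fin]
  exact congrArg _ (hGram.det_eq_prod_diag.trans
    (Fin.prod_univ_eq_prod_range (fun n => innerGin ψ (Q n) (Q n)) N))

/-- **Corollary (Sinclair, GinUE).**  If `Q` is the complete family of monic
polynomials orthogonal with respect to `⟨·|·⟩`, then the unnormalized GinUE ensemble
average `∫_{ℂ^N} |Δ(γ)|² ∏_n ψ(γ_n)e^{−|γ_n|²/2} dλ_{2N}(γ)` equals
`N! ∏_{n=1}^N ⟨Q_n|Q_n⟩`, assuming absolute integrability. -/
theorem ginue_average_eq_prod (N : ℕ) (hN : 1 ≤ N) (ψ : ℂ → ℝ)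
    (Q : ℕ → Polynomial ℂ)
    (hQ : ∀ n < N, (Q n).Monic ∧ (Q n).natDegree = n)
    (horth : ∀ j < N, ∀ k < N, j ≠ k → innerGin ψ (Q j) (Q k) = 0)
    (hInt : Integrable (fun γ : Fin N → ℂ => ginueIntegrand ψ γ))
    (hIntW : ∀ p < N, ∀ q < N, Integrable (fun γ : ℂ =>
      ((Real.exp (-(‖γ‖)^2/2) : ℝ) : ℂ) * ((ψ γ : ℝ) : ℂ) *
        (starRingEnd ℂ) ((Q p).eval γ) * (Q q).eval γ)) :
    (∫ γ : Fin N → ℂ, ginueIntegrand ψ γ)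
      = (Nat.factorial N : ℂ) * ∏ n ∈ Finset.range N, innerGin ψ (Q n) (Q n) :=
  ginue_average_eq_prod_general N ψ Q hQ horth hIntW
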